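/- Let p be a strongly irreducible, finitely supported, ℤ^d-invariant Markov transition kernel on ℤ^d × {1,…,N} (so F(0) is a stochastic matrix), let ν₀ ∈ ℝ^N be a vector with all entries positive, ∑_k ν₀(k) = 1 and ν₀F(0) = ν₀, and let λ : ℝ^d → ℝ be the function assigning to u the unique eigenvalue of F(u) admitting an eigenvector with all entries positive. Then λ(0) = 1, λ is differentiable at 0, and its gradient at 0 equals the drift vector p⃗ = ∑_{x∈ℤ^d} ∑_{k,j} ν₀(k)·x·p_{k,j}(0,x); consequently 1 is the minimum value of λ if and only if the chain is centered, i.e. p⃗ = 0. -/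

import Mathlib

open scoped ENNReal
open Filter Topology

noncomputable section

/-- Convolution powers of a `ℤ^d`-invariant kernel on `ℤ^d × {1,…,N}`, where
`q z k j = p_{k,j}(0,z)`; `p^{(n)}_{k,j}(x,y)` is `convPow q n (y-x) k j`. -/
def convPow {d N : ℕ} (q : (Fin d → ℤ) → Fin N → Fin N → ℝ≥0∞) :
    ℕ → (Fin d → ℤ) → Fin N → Fin N → ℝ≥0∞
  | 0 => fun z k j => if z = 0 ∧ k = j then 1 else 0
  | n + 1 => fun z k j => ∑' w : Fin d → ℤ, ∑ l : Fin N, q w k l * convPow q n (z - w) l j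

/-- Strong irreducibility: for all `x, y, k, j` there is `n₀` with `p^{(n)}_{k,j}(x,y) > 0` for
all `n ≥ n₀`. -/
def StronglyIrreducibleKer {d N : ℕ} (q : (Fin d → ℤ) → Fin N → Fin N → ℝ≥0∞) : Prop :=
  ∀ (z : Fin d → ℤ) (k j : Fin N), ∃ n₀ : ℕ, ∀ n ≥ n₀, 0 < convPow q n z k j

/-- (Weak) irreducibility: for all `x, y, k, j` there is `n` with `p^{(n)}_{k,j}(x,y) > 0`. -/
def IrreducibleKer {d N : ℕ} (q : (Fin d → ℤ) → Fin N → Fin N → ℝ≥0∞) : Prop :=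
  ∀ (z : Fin d → ℤ) (k j : Fin N), ∃ n : ℕ, 0 < convPow q n z k j

/-- Finitely supported kernel: `{(y,j) : p_{k,j}(0,y) > 0}` is finite for each `k`. -/
def FinSuppKer {d N : ℕ} (q : (Fin d → ℤ) → Fin N → Fin N → ℝ≥0∞) : Prop :=
  ∀ k : Fin N, {zj : (Fin d → ℤ) × Fin N | q zj.1 k zj.2 ≠ 0}.Finite

/-- `u · z` for `u ∈ ℝ^d`, `z ∈ ℤ^d`. -/
def dotZ {d : ℕ} (u : Fin d → ℝ) (z : Fin d → ℤ) : ℝ := ∑ i, u i * (z i : ℝ)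

/-- The matrix `F(u)` with entries `F_{k,j}(u) = ∑_{x∈ℤ^d} p_{k,j}(0,x) e^{u·x} ∈ [0,∞]`. -/
def Fmat {d N : ℕ} (q : (Fin d → ℤ) → Fin N → Fin N → ℝ≥0∞) (u : Fin d → ℝ) :
    Matrix (Fin N) (Fin N) ℝ≥0∞ :=
  Matrix.of fun k j => ∑' z : Fin d → ℤ, q z k j * ENNReal.ofReal (Real.exp (dotZ u z))

/-- The real matrix `F(u)` (meaningful when all entries are finite). -/
def FmatR {d N : ℕ} (q : (Fin d → ℤ) → Fin N → Fin N → ℝ≥0∞) (u : Fin d → ℝ) :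
    Matrix (Fin N) (Fin N) ℝ :=
  Matrix.of fun k j => (Fmat q u k j).toReal

/-- The continuous linear map `v ↦ ∑ i, m i * v i`, i.e. the linear form with gradient `m`. -/
def dotCLM {d : ℕ} (m : Fin d → ℝ) : (Fin d → ℝ) →L[ℝ] ℝ :=
  ∑ i, m i • (ContinuousLinearMap.proj i : (Fin d → ℝ) →L[ℝ] ℝ)

/-- The drift vector `p⃗ = ∑_{x} ∑_{k,j} ν₀(k)·x·p_{k,j}(0,x)`. -/
def driftVec {d N : ℕ} (q : (Fin d → ℤ) → Fin N → Fin N → ℝ≥0∞) (ν₀ : Fin N → ℝ) :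
    Fin d → ℝ :=
  fun i => ∑' z : Fin d → ℤ, ∑ k, ∑ j, ν₀ k * (z i : ℝ) * (q z k j).toReal

/-- Euclidean norm on `ℤ^d`. -/
def eNormZ {d : ℕ} (z : Fin d → ℤ) : ℝ := Real.sqrt (∑ i, ((z i : ℝ)) ^ 2)

/-- Euclidean norm on `ℝ^d`. -/
def eNormR {d : ℕ} (v : Fin d → ℝ) : ℝ := Real.sqrt (∑ i, (v i) ^ 2)

/-- The value of the quadratic form associated to a symmetric matrix. -/
def quadVal {d : ℕ} (M : Matrix (Fin d) (Fin d) ℝ) (v : Fin d → ℝ) : ℝ :=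
  dotProduct v (M.mulVec v)

/-! ### Auxiliary lemmas -/

lemma dotZ_zero {d : ℕ} (z : Fin d → ℤ) : dotZ 0 z = 0 := by simp [dotZ]

lemma fmat0_apply {d N : ℕ} (q : (Fin d → ℤ) → Fin N → Fin N → ℝ≥0∞) (k j : Fin N) :
    Fmat q 0 k j = ∑' z, q z k j := by
  simp [Fmat, dotZ_zero]

lemma convPow_le_pow {d N : ℕ} (q : (Fin d → ℤ) → Fin N → Fin N → ℝ≥0∞) :
    ∀ (n : ℕ) (z : Fin d → ℤ) (k j : Fin N), convPow q n z k j ≤ (Fmat q 0 ^ n) k j := by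
  intro n
  induction n with
  | zero =>
      intro z k j
      simp only [convPow, pow_zero, Matrix.one_apply]
      by_cases h : z = 0 ∧ k = j
      · simp [h, h.2]
      · split_ifs with h2 <;> simp [h]
  | succ n ih =>
      intro z k j
      show (∑' w : Fin d → ℤ, ∑ l : Fin N, q w k l * convPow q n (z - w) l j) ≤ _
      have step1 : (∑' w : Fin d → ℤ, ∑ l : Fin N, q w k l * convPow q n (z - w) l j)
          ≤ ∑' w : Fin d → ℤ, ∑ l : Fin N, q w k l * (Fmat q 0 ^ n) l j := by
        refine ENNReal.tsum_le_tsum fun w => Finset.sum_le_sum fun l _ => ?_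
        exact mul_le_mul_right (ih _ _ _) _
      refine step1.trans ?_
      have step2 : (∑' w : Fin d → ℤ, ∑ l : Fin N, q w k l * (Fmat q 0 ^ n) l j)
          = ∑ l : Fin N, (∑' w : Fin d → ℤ, q w k l) * (Fmat q 0 ^ n) l j := by
        rw [Summable.tsum_finsetSum (fun l _ => ENNReal.summable)]
        exact Finset.sum_congr rfl fun l _ => ENNReal.tsum_mul_right
      rw [step2, pow_succ']
      rw [Matrix.mul_apply]
      exact le_of_eq (Finset.sum_congr rfl fun l _ => by rw [fmat0_apply])

lemma fmat0_row_sum {d N : ℕ} (q : (Fin d → ℤ) → Fin N → Fin N → ℝ≥0∞)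
    (hM : ∀ k : Fin N, (∑' z : Fin d → ℤ, ∑ j, q z k j) = 1) :
    ∀ n k, ∑ j, (Fmat q 0 ^ n) k j = 1 := by
  intro n
  induction n with
  | zero => intro k; simp [Matrix.one_apply]
  | succ n ih =>
      intro k
      rw [pow_succ]
      simp only [Matrix.mul_apply]
      rw [Finset.sum_comm]
      have h1 : ∀ l, ∑ j, (Fmat q 0 ^ n) k l * Fmat q 0 l j = (Fmat q 0 ^ n) k l := by
        intro l
        rw [← Finset.mul_sum]
        have h2 : ∑ j, Fmat q 0 l j = 1 := by
          simp only [fmat0_apply]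
          rw [← Summable.tsum_finsetSum (fun j _ => ENNReal.summable)]
          exact hM l
        rw [h2, mul_one]
      rw [Finset.sum_congr rfl fun l _ => h1 l]
      exact ih k

lemma pow_entry_ne_top {d N : ℕ} (q : (Fin d → ℤ) → Fin N → Fin N → ℝ≥0∞)
    (hM : ∀ k : Fin N, (∑' z : Fin d → ℤ, ∑ j, q z k j) = 1) (n : ℕ) (k j : Fin N) :
    (Fmat q 0 ^ n) k j ≠ ⊤ := by
  have h1 : (Fmat q 0 ^ n) k j ≤ 1 := by
    rw [← fmat0_row_sum q hM n k]
    exact Finset.single_le_sum (fun _ _ => zero_le) (Finset.mem_univ j)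
  exact ne_top_of_le_ne_top ENNReal.one_ne_top h1

lemma powR_eq {d N : ℕ} (q : (Fin d → ℤ) → Fin N → Fin N → ℝ≥0∞)
    (hM : ∀ k : Fin N, (∑' z : Fin d → ℤ, ∑ j, q z k j) = 1) :
    ∀ (n : ℕ) (k j : Fin N), ((FmatR q 0) ^ n) k j = ((Fmat q 0 ^ n) k j).toReal := by
  intro n
  induction n with
  | zero =>
      intro k j
      by_cases h : k = j <;> simp [Matrix.one_apply, h]
  | succ n ih =>
      intro k j
      rw [pow_succ, pow_succ, Matrix.mul_apply, Matrix.mul_apply,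
        ENNReal.toReal_sum (fun l _ => ?_)]
      · refine Finset.sum_congr rfl fun l _ => ?_
        rw [ih, ENNReal.toReal_mul]
        rfl
      · exact ENNReal.mul_ne_top (pow_entry_ne_top q hM n k l)
          (by simpa using pow_entry_ne_top q hM 1 l j)

lemma pow_nonneg_entries {N : ℕ} (M : Matrix (Fin N) (Fin N) ℝ)
    (hnn : ∀ k j, 0 ≤ M k j) : ∀ n k j, 0 ≤ (M ^ n) k j := by
  intro n
  induction n with
  | zero => intro k j; by_cases h : k = j <;> simp [Matrix.one_apply, h]
  | succ n ih =>
      intro k j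
      rw [pow_succ, Matrix.mul_apply]
      exact Finset.sum_nonneg fun l _ => mul_nonneg (ih k l) (hnn l j)

lemma pow_row_sum_real {N : ℕ} (M : Matrix (Fin N) (Fin N) ℝ)
    (hrow : ∀ k, ∑ j, M k j = 1) : ∀ n k, ∑ j, (M ^ n) k j = 1 := by
  intro n
  induction n with
  | zero => intro k; simp [Matrix.one_apply]
  | succ n ih =>
      intro k
      rw [pow_succ]
      simp only [Matrix.mul_apply]
      rw [Finset.sum_comm]
      calc ∑ l, ∑ j, (M ^ n) k l * M l j = ∑ l, (M ^ n) k l := by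
            refine Finset.sum_congr rfl fun l _ => ?_
            rw [← Finset.mul_sum, hrow l, mul_one]
        _ = 1 := ih k

lemma pow_fix {N : ℕ} (M : Matrix (Fin N) (Fin N) ℝ) (x : Fin N → ℝ)
    (hx : M.mulVec x = x) : ∀ n, (M ^ n).mulVec x = x := by
  intro n
  induction n with
  | zero => simp
  | succ n ih => rw [pow_succ, ← Matrix.mulVec_mulVec, hx, ih]

lemma stoch_ker_const {N : ℕ} (M : Matrix (Fin N) (Fin N) ℝ) (m : ℕ)
    (hrow : ∀ k, ∑ j, M k j = 1) (hpos : ∀ k j, 0 < (M ^ m) k j)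
    (x : Fin N → ℝ) (hx : M.mulVec x = x) : ∀ k j, x k = x j := by
  intro k j
  have hNpos : Nonempty (Fin N) := ⟨k⟩
  obtain ⟨k0, -, hk0⟩ := Finset.exists_max_image Finset.univ x ⟨k, Finset.mem_univ k⟩
  have hfix : (M ^ m).mulVec x = x := pow_fix M x hx m
  have hall : ∀ a, x a = x k0 := by
    intro a
    by_contra hne
    have hlt : x a < x k0 := lt_of_le_of_ne (hk0 a (Finset.mem_univ a)) hne
    have h1 : x k0 = ∑ l, (M ^ m) k0 l * x l := by
      rw [← congrFun hfix k0]; rfl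
    have h2 : ∑ l, (M ^ m) k0 l * x l < ∑ l, (M ^ m) k0 l * x k0 := by
      refine Finset.sum_lt_sum (fun l _ => ?_) ⟨a, Finset.mem_univ a, ?_⟩
      · exact mul_le_mul_of_nonneg_left (hk0 l (Finset.mem_univ l)) (hpos k0 l).le
      · exact mul_lt_mul_of_pos_left hlt (hpos k0 a)
    have h3 : ∑ l, (M ^ m) k0 l * x k0 = x k0 := by
      rw [← Finset.sum_mul, pow_row_sum_real M hrow m k0, one_mul]
    rw [← h1, h3] at h2
    exact lt_irrefl _ h2
  rw [hall k, hall j]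

lemma stoch_surj {N : ℕ} (hN : 0 < N) (M : Matrix (Fin N) (Fin N) ℝ) (ν : Fin N → ℝ)
    (hrow : ∀ k, ∑ j, M k j = 1) (hker : ∀ x, M.mulVec x = x → ∀ k j, x k = x j)
    (hν : Matrix.vecMul ν M = ν) (hνsum : ∑ k, ν k = 1)
    (w : Fin N → ℝ) (hw : dotProduct ν w = 0) :
    ∃ h : Fin N → ℝ, w = h - M.mulVec h := by
  classical
  set T : (Fin N → ℝ) →ₗ[ℝ] (Fin N → ℝ) := (1 - M).mulVecLin with hT
  have hTapp : ∀ v, T v = v - M.mulVec v := by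
    intro v
    rw [hT, Matrix.mulVecLin_apply, Matrix.sub_mulVec, Matrix.one_mulVec]
  set ℓ : (Fin N → ℝ) →ₗ[ℝ] ℝ :=
    { toFun := fun x => dotProduct ν x
      map_add' := fun a b => dotProduct_add ν a b
      map_smul' := fun c a => by simp [dotProduct_smul] } with hℓ
  have one_vec : M.mulVec (fun _ => 1) = fun _ => 1 := by
    funext k
    simp [Matrix.mulVec, dotProduct, hrow k]
  have hone_ne : (fun _ => (1:ℝ) : Fin N → ℝ) ≠ 0 := by
    intro hcontra
    have := congrFun hcontra ⟨0, hN⟩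
    simp at this
  have hkerT : LinearMap.ker T = Submodule.span ℝ {(fun _ => (1:ℝ) : Fin N → ℝ)} := by
    apply le_antisymm
    · intro x hx
      have hx' : M.mulVec x = x := by
        have h1 := hTapp x
        rw [LinearMap.mem_ker.mp hx] at h1
        have h2 := sub_eq_zero.mp h1.symm
        exact h2.symm
      have hc := hker x hx'
      rw [Submodule.mem_span_singleton]
      exact ⟨x ⟨0, hN⟩, by funext a; simp [hc a ⟨0, hN⟩]⟩
    · rw [Submodule.span_le, Set.singleton_subset_iff]
      have hone : T (fun _ => 1) = 0 := by rw [hTapp, one_vec]; simp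
      exact LinearMap.mem_ker.mpr hone
  have hkerT_rank : Module.finrank ℝ (LinearMap.ker T) = 1 := by
    rw [hkerT]; exact finrank_span_singleton hone_ne
  have hℓsurj : LinearMap.range ℓ = ⊤ := by
    rw [LinearMap.range_eq_top]
    intro c
    refine ⟨(fun _ => c : Fin N → ℝ), ?_⟩
    show dotProduct ν (fun _ => c) = c
    simp only [dotProduct]
    rw [← Finset.sum_mul, hνsum, one_mul]
  have hrange_le : LinearMap.range T ≤ LinearMap.ker ℓ := by
    rintro _ ⟨v, rfl⟩
    rw [LinearMap.mem_ker, hTapp]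
    show dotProduct ν (v - M.mulVec v) = 0
    rw [dotProduct_sub, Matrix.dotProduct_mulVec, hν, sub_self]
  have hrank1 : Module.finrank ℝ (LinearMap.range T) + 1 = N := by
    have h1 := LinearMap.finrank_range_add_finrank_ker T
    rw [hkerT_rank] at h1
    simpa using h1
  have hrank2 : Module.finrank ℝ (LinearMap.ker ℓ) + 1 = N := by
    have h1 := LinearMap.finrank_range_add_finrank_ker ℓ
    rw [hℓsurj] at h1
    have h2 : Module.finrank ℝ (⊤ : Submodule ℝ ℝ) = 1 := by simp
    rw [h2] at h1
    have h3 : Module.finrank ℝ (Fin N → ℝ) = N := by simp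
    rw [h3] at h1
    omega
  have heq : LinearMap.range T = LinearMap.ker ℓ :=
    Submodule.eq_of_le_of_finrank_le hrange_le (by omega)
  have hw' : w ∈ LinearMap.ker ℓ := by
    rw [LinearMap.mem_ker]; exact hw
  rw [← heq] at hw'
  obtain ⟨h, hh⟩ := hw'
  exact ⟨h, by rw [← hh, hTapp]⟩

lemma dotCLM_apply {d : ℕ} (m w : Fin d → ℝ) : dotCLM m w = ∑ i, m i * w i := by
  simp [dotCLM, ContinuousLinearMap.sum_apply]

lemma dotCLM_hasFDerivAt {d : ℕ} (m : Fin d → ℝ) (x : Fin d → ℝ) :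
    HasFDerivAt (fun u : Fin d → ℝ => ∑ i, m i * u i) (dotCLM m) x := by
  have h1 := (dotCLM m).hasFDerivAt (x := x)
  have heq : (fun u : Fin d → ℝ => ∑ i, m i * u i) = fun u => dotCLM m u := by
    funext u; rw [dotCLM_apply]
  rw [heq]
  exact h1

lemma perron_upper {N : ℕ} (hN : 0 < N) (M : Matrix (Fin N) (Fin N) ℝ)
    (hnn : ∀ k j, 0 ≤ M k j) (C v : Fin N → ℝ) (hC : ∀ k, 0 < C k) (hv : ∀ k, 0 < v k)
    (lam : ℝ) (heig : M.mulVec C = lam • C) :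
    ∃ k, lam ≤ M.mulVec v k / v k := by
  classical
  obtain ⟨k0, -, hk0⟩ := Finset.exists_max_image Finset.univ (fun k => C k / v k)
    ⟨⟨0, hN⟩, Finset.mem_univ _⟩
  refine ⟨k0, ?_⟩
  set ρ := C k0 / v k0 with hρ
  have hρpos : 0 < ρ := div_pos (hC k0) (hv k0)
  have hle : ∀ j, C j ≤ ρ * v j := by
    intro j
    have h := hk0 j (Finset.mem_univ j)
    rw [div_le_iff₀ (hv j)] at h
    linarith [h]
  have h1 : lam * C k0 ≤ ρ * M.mulVec v k0 := by
    have hmv : M.mulVec C k0 = lam * C k0 := by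
      rw [heig]; rfl
    rw [← hmv]
    show ∑ j, M k0 j * C j ≤ ρ * ∑ j, M k0 j * v j
    rw [Finset.mul_sum]
    refine Finset.sum_le_sum fun j _ => ?_
    calc M k0 j * C j ≤ M k0 j * (ρ * v j) := mul_le_mul_of_nonneg_left (hle j) (hnn k0 j)
      _ = ρ * (M k0 j * v j) := by ring
  have hCk0 : C k0 = ρ * v k0 := by
    rw [hρ, div_mul_cancel₀ _ (hv k0).ne']
  rw [hCk0] at h1
  have h2 : lam * v k0 ≤ M.mulVec v k0 := by nlinarith [hρpos, hv k0]
  rw [le_div_iff₀ (hv k0)]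
  linarith

/-- for a strongly irreducible, finitely supported, `ℤ^d`-invariant Markov kernel
on `ℤ^d × {1,…,N}`, with stationary vector `ν₀` of the stochastic matrix `F(0)` and Perron
eigenvalue function `λ`, one has `λ(0) = 1`, `λ` is differentiable at `0` with gradient equal
to the drift `p⃗`, and `1` is the minimum value of `λ` iff the chain is centered (`p⃗ = 0`). -/
theorem stmt5 {d N : ℕ} (hN : 0 < N) (q : (Fin d → ℤ) → Fin N → Fin N → ℝ≥0∞)
    (hM : ∀ k : Fin N, (∑' z : Fin d → ℤ, ∑ j, q z k j) = 1)
    (hfs : FinSuppKer q)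
    (hirr : StronglyIrreducibleKer q)
    (ν₀ : Fin N → ℝ) (hν₀pos : ∀ k, 0 < ν₀ k) (hν₀sum : ∑ k, ν₀ k = 1)
    (hν₀stat : Matrix.vecMul ν₀ (FmatR q 0) = ν₀)
    (lam : (Fin d → ℝ) → ℝ)
    (hPerron : ∀ u : Fin d → ℝ, ∃ C : Fin N → ℝ,
      (∀ k, 0 < C k) ∧ (FmatR q u).mulVec C = lam u • C) :
    lam 0 = 1 ∧
    HasFDerivAt lam (dotCLM (driftVec q ν₀)) 0 ∧
    ((∀ u : Fin d → ℝ, 1 ≤ lam u) ↔ driftVec q ν₀ = 0) := by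
    classical
  -- basic finiteness facts
  have hq_le_one : ∀ z k j, q z k j ≤ 1 := by
    intro z k j
    rw [← hM k]
    calc q z k j ≤ ∑ j', q z k j' :=
          Finset.single_le_sum (fun _ _ => zero_le) (Finset.mem_univ j)
      _ ≤ ∑' z', ∑ j', q z' k j' := ENNReal.le_tsum z
  have hq_ne_top : ∀ z k j, q z k j ≠ ⊤ :=
    fun z k j => ne_top_of_le_ne_top ENNReal.one_ne_top (hq_le_one z k j)
  set r : (Fin d → ℤ) → Fin N → Fin N → ℝ := fun z k j => (q z k j).toReal with hrdef
  have hr_nonneg : ∀ z k j, 0 ≤ r z k j := fun z k j => ENNReal.toReal_nonneg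
  set Z : Finset (Fin d → ℤ) :=
    Finset.univ.biUnion (fun k => ((hfs k).toFinset.image Prod.fst)) with hZdef
  have hZ : ∀ z k j, q z k j ≠ 0 → z ∈ Z := by
    intro z k j hq
    refine Finset.mem_biUnion.mpr ⟨k, Finset.mem_univ k, ?_⟩
    exact Finset.mem_image.mpr ⟨(z, j), (Set.Finite.mem_toFinset _).mpr hq, rfl⟩
  have hq_zero : ∀ z k j, z ∉ Z → q z k j = 0 := by
    intro z k j hz
    by_contra h
    exact hz (hZ z k j h)
  have hr_zero : ∀ z k j, z ∉ Z → r z k j = 0 := by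
    intro z k j hz
    rw [hrdef]
    simp [hq_zero z k j hz]
  -- the basic formula for FmatR
  have hFapp : ∀ u k j, FmatR q u k j = ∑ z ∈ Z, r z k j * Real.exp (dotZ u z) := by
    intro u k j
    have h0 : Fmat q u k j = ∑' z, q z k j * ENNReal.ofReal (Real.exp (dotZ u z)) := rfl
    have h1 : (∑' z, q z k j * ENNReal.ofReal (Real.exp (dotZ u z)))
        = ∑ z ∈ Z, q z k j * ENNReal.ofReal (Real.exp (dotZ u z)) :=
      tsum_eq_sum fun z hz => by rw [hq_zero z k j hz, zero_mul]
    show (Fmat q u k j).toReal = _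
    rw [h0, h1, ENNReal.toReal_sum
      (fun z _ => ENNReal.mul_ne_top (hq_ne_top z k j) ENNReal.ofReal_ne_top)]
    refine Finset.sum_congr rfl fun z _ => ?_
    rw [ENNReal.toReal_mul, ENNReal.toReal_ofReal (Real.exp_nonneg _)]
  have hFnn : ∀ u k j, (0:ℝ) ≤ FmatR q u k j := fun u k j => ENNReal.toReal_nonneg
  have hS0 : ∀ k j, FmatR q 0 k j = ∑ z ∈ Z, r z k j := by
    intro k j
    rw [hFapp]
    exact Finset.sum_congr rfl fun z _ => by rw [dotZ_zero, Real.exp_zero, mul_one]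
  have hSrow : ∀ k, ∑ j, FmatR q 0 k j = 1 := by
    intro k
    have h1 := fmat0_row_sum q hM 1 k
    rw [pow_one] at h1
    calc ∑ j, FmatR q 0 k j = ∑ j, (Fmat q 0 k j).toReal := rfl
      _ = (∑ j, Fmat q 0 k j).toReal :=
          (ENNReal.toReal_sum (fun j _ => by simpa using pow_entry_ne_top q hM 1 k j)).symm
      _ = 1 := by rw [h1]; rfl
  have hrow1 : ∀ k, ∑ j, ∑ z ∈ Z, r z k j = 1 := by
    intro k
    rw [← hSrow k]
    exact Finset.sum_congr rfl fun j _ => (hS0 k j).symm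
  -- drift as a finite sum
  have hdrift : ∀ i, driftVec q ν₀ i = ∑ z ∈ Z, ∑ k, ∑ j, ν₀ k * (z i : ℝ) * r z k j := by
    intro i
    refine tsum_eq_sum fun z hz => ?_
    refine Finset.sum_eq_zero fun k _ => Finset.sum_eq_zero fun j _ => ?_
    rw [show (q z k j).toReal = r z k j from rfl, hr_zero z k j hz, mul_zero]
  -- lam 0 = 1
  obtain ⟨C0, hC0pos, hC0eig⟩ := hPerron 0
  have hlam0 : lam 0 = 1 := by
    have hdot : dotProduct ν₀ ((FmatR q 0).mulVec C0) = dotProduct ν₀ C0 := by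
      rw [Matrix.dotProduct_mulVec, hν₀stat]
    rw [hC0eig] at hdot
    have hsm : dotProduct ν₀ (lam 0 • C0) = lam 0 * dotProduct ν₀ C0 := by
      simp only [dotProduct, Pi.smul_apply, smul_eq_mul, Finset.mul_sum]
      exact Finset.sum_congr rfl fun k _ => by ring
    rw [hsm] at hdot
    have hpos : 0 < dotProduct ν₀ C0 :=
      Finset.sum_pos (fun k _ => mul_pos (hν₀pos k) (hC0pos k)) ⟨⟨0, hN⟩, Finset.mem_univ _⟩
    nlinarith [hdot, hpos]
  -- lower bound via Jensen
  have hlower : ∀ u, Real.exp (∑ i, driftVec q ν₀ i * u i) ≤ lam u := by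
    intro u
    obtain ⟨C, hCpos, hCeig⟩ := hPerron u
    set s : Finset ((Fin d → ℤ) × Fin N) := Z ×ˢ Finset.univ with hsdef
    have hwsum : ∀ k, ∑ zj ∈ s, r zj.1 k zj.2 = 1 := by
      intro k
      rw [hsdef, Finset.sum_product, Finset.sum_comm]
      exact hrow1 k
    have hmul : ∀ k, ((FmatR q u).mulVec C) k = lam u * C k := by
      intro k; rw [hCeig]; rfl
    have hrowpos : ∀ k, 0 < ((FmatR q u).mulVec C) k := by
      intro k
      have hex : ∃ z ∈ Z, ∃ j, 0 < r z k j := by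
        by_contra hcon
        push_neg at hcon
        have h0 : ∑ j, ∑ z ∈ Z, r z k j = 0 := by
          refine Finset.sum_eq_zero fun j _ => Finset.sum_eq_zero fun z hz => ?_
          exact le_antisymm (hcon z hz j) (hr_nonneg z k j)
        rw [hrow1 k] at h0
        norm_num at h0
      obtain ⟨z0, hz0, j0, hrj⟩ := hex
      show 0 < ∑ j, FmatR q u k j * C j
      refine Finset.sum_pos' (fun j _ => mul_nonneg (hFnn u k j) (hCpos j).le)
        ⟨j0, Finset.mem_univ _, mul_pos ?_ (hCpos j0)⟩
      rw [hFapp]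
      exact Finset.sum_pos' (fun z _ => mul_nonneg (hr_nonneg z k j0) (Real.exp_pos _).le)
        ⟨z0, hz0, mul_pos hrj (Real.exp_pos _)⟩
    have hlampos : 0 < lam u := by
      have h1 := hrowpos ⟨0, hN⟩
      rw [hmul ⟨0, hN⟩] at h1
      have h2 := hCpos ⟨0, hN⟩
      nlinarith
    have hJ : ∀ k, ∑ zj ∈ s, r zj.1 k zj.2 * (dotZ u zj.1 + Real.log (C zj.2))
        ≤ Real.log (lam u) + Real.log (C k) := by
      intro k
      have hcc : ConcaveOn ℝ (Set.Ioi 0) Real.log := strictConcaveOn_log_Ioi.concaveOn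
      have happ := hcc.le_map_sum (t := s) (w := fun zj => r zj.1 k zj.2)
        (p := fun zj => Real.exp (dotZ u zj.1) * C zj.2)
        (fun zj _ => hr_nonneg _ _ _) (hwsum k)
        (fun zj _ => Set.mem_Ioi.mpr (mul_pos (Real.exp_pos _) (hCpos _)))
      have hcomb : ∑ zj ∈ s, r zj.1 k zj.2 • (Real.exp (dotZ u zj.1) * C zj.2)
          = lam u * C k := by
        rw [← hmul k]
        show _ = ∑ j, FmatR q u k j * C j
        rw [hsdef, Finset.sum_product, Finset.sum_comm]
        refine Finset.sum_congr rfl fun j _ => ?_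
        rw [hFapp, Finset.sum_mul]
        refine Finset.sum_congr rfl fun z _ => ?_
        simp only [smul_eq_mul]; ring
      rw [hcomb] at happ
      have hlog : Real.log (lam u * C k) = Real.log (lam u) + Real.log (C k) :=
        Real.log_mul hlampos.ne' (hCpos k).ne'
      rw [hlog] at happ
      refine le_trans (le_of_eq ?_) happ
      refine Finset.sum_congr rfl fun zj _ => ?_
      rw [smul_eq_mul, Real.log_mul (Real.exp_pos _).ne' (hCpos zj.2).ne', Real.log_exp]
    have hsum := Finset.sum_le_sum (fun k (_ : k ∈ Finset.univ) =>
      mul_le_mul_of_nonneg_left (hJ k) (hν₀pos k).le)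
    have hRHS : ∑ k, ν₀ k * (Real.log (lam u) + Real.log (C k))
        = Real.log (lam u) + ∑ k, ν₀ k * Real.log (C k) := by
      simp only [mul_add]
      rw [Finset.sum_add_distrib, ← Finset.sum_mul, hν₀sum, one_mul]
    have hA : ∑ k, ν₀ k * (∑ zj ∈ s, r zj.1 k zj.2 * dotZ u zj.1)
        = ∑ i, driftVec q ν₀ i * u i := by
      have e1 : ∀ k : Fin N, ∑ zj ∈ s, r zj.1 k zj.2 * dotZ u zj.1
          = ∑ z ∈ Z, ∑ j, r z k j * dotZ u z := by
        intro k; rw [hsdef, Finset.sum_product]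
      have hR : ∑ i, driftVec q ν₀ i * u i
          = ∑ z ∈ Z, ∑ k, ∑ j, ∑ i, ν₀ k * (z i : ℝ) * r z k j * u i := by
        simp only [hdrift, Finset.sum_mul]
        rw [Finset.sum_comm]
        refine Finset.sum_congr rfl fun z _ => ?_
        rw [Finset.sum_comm]
        refine Finset.sum_congr rfl fun k _ => ?_
        rw [Finset.sum_comm]
      rw [hR]
      simp only [e1, Finset.mul_sum]
      rw [Finset.sum_comm]
      refine Finset.sum_congr rfl fun z _ => Finset.sum_congr rfl fun k _ => ?_
      refine Finset.sum_congr rfl fun j _ => ?_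
      show ν₀ k * (r z k j * dotZ u z) = _
      rw [show dotZ u z = ∑ i, u i * (z i : ℝ) from rfl, Finset.mul_sum, Finset.mul_sum]
      exact Finset.sum_congr rfl fun i _ => by ring
    have hB : ∑ k, ν₀ k * (∑ zj ∈ s, r zj.1 k zj.2 * Real.log (C zj.2))
        = ∑ k, ν₀ k * Real.log (C k) := by
      have e1 : ∀ k : Fin N, ∑ zj ∈ s, r zj.1 k zj.2 * Real.log (C zj.2)
          = ∑ j, FmatR q 0 k j * Real.log (C j) := by
        intro k
        rw [hsdef, Finset.sum_product, Finset.sum_comm]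
        refine Finset.sum_congr rfl fun j _ => ?_
        rw [hS0, Finset.sum_mul]
      simp only [e1, Finset.mul_sum]
      rw [Finset.sum_comm]
      refine Finset.sum_congr rfl fun j _ => ?_
      have hst : ∑ k, ν₀ k * FmatR q 0 k j = ν₀ j := by
        have h1 := congrFun hν₀stat j
        rw [← h1]; rfl
      calc ∑ k, ν₀ k * (FmatR q 0 k j * Real.log (C j))
          = (∑ k, ν₀ k * FmatR q 0 k j) * Real.log (C j) := by
            rw [Finset.sum_mul]
            exact Finset.sum_congr rfl fun k _ => by ring
        _ = ν₀ j * Real.log (C j) := by rw [hst]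
    have hLHS : ∑ k, ν₀ k * (∑ zj ∈ s, r zj.1 k zj.2 * (dotZ u zj.1 + Real.log (C zj.2)))
        = (∑ i, driftVec q ν₀ i * u i) + ∑ k, ν₀ k * Real.log (C k) := by
      have hsplit : ∀ k : Fin N,
          ν₀ k * (∑ zj ∈ s, r zj.1 k zj.2 * (dotZ u zj.1 + Real.log (C zj.2)))
          = ν₀ k * (∑ zj ∈ s, r zj.1 k zj.2 * dotZ u zj.1)
            + ν₀ k * (∑ zj ∈ s, r zj.1 k zj.2 * Real.log (C zj.2)) := by
        intro k
        rw [← mul_add, ← Finset.sum_add_distrib]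
        congr 1
        exact Finset.sum_congr rfl fun zj _ => by ring
      simp only [hsplit]
      rw [Finset.sum_add_distrib, hA, hB]
    rw [hLHS, hRHS] at hsum
    have hfin : (∑ i, driftVec q ν₀ i * u i) ≤ Real.log (lam u) := by linarith
    calc Real.exp (∑ i, driftVec q ν₀ i * u i)
        ≤ Real.exp (Real.log (lam u)) := Real.exp_le_exp.mpr hfin
      _ = lam u := Real.exp_log hlampos
  -- positive power
  obtain ⟨m, hmpos⟩ : ∃ m, ∀ k j, 0 < ((FmatR q 0) ^ m) k j := by
    choose f hf using fun kj : Fin N × Fin N => hirr 0 kj.1 kj.2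
    refine ⟨Finset.univ.sup f, fun k j => ?_⟩
    have h1 : 0 < convPow q (Finset.univ.sup f) 0 k j :=
      hf (k, j) _ (Finset.le_sup (Finset.mem_univ (k, j)))
    have h2 := convPow_le_pow q (Finset.univ.sup f) 0 k j
    rw [powR_eq q hM]
    exact ENNReal.toReal_pos (lt_of_lt_of_le h1 h2).ne' (pow_entry_ne_top q hM _ k j)
  have hkerconst : ∀ x, (FmatR q 0).mulVec x = x → ∀ k j, x k = x j :=
    fun x hx => stoch_ker_const _ m hSrow hmpos x hx
  have hsurj : ∀ w, dotProduct ν₀ w = 0 → ∃ h, w = h - (FmatR q 0).mulVec h :=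
    fun w hw => stoch_surj hN _ ν₀ hSrow hkerconst hν₀stat hν₀sum w hw
  -- row drifts and corrector vectors
  set b : Fin d → Fin N → ℝ := fun i k => ∑ z ∈ Z, ∑ j, (z i : ℝ) * r z k j with hbdef
  have hbdrift : ∀ i, driftVec q ν₀ i = ∑ k, ν₀ k * b i k := by
    intro i
    rw [hdrift i, Finset.sum_comm]
    refine Finset.sum_congr rfl fun k _ => ?_
    show _ = ν₀ k * ∑ z ∈ Z, ∑ j, (z i : ℝ) * r z k j
    rw [Finset.mul_sum]
    refine Finset.sum_congr rfl fun z _ => ?_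
    rw [Finset.mul_sum]
    exact Finset.sum_congr rfl fun j _ => by ring
  have hw0 : ∀ i, dotProduct ν₀ (fun k => b i k - driftVec q ν₀ i) = 0 := by
    intro i
    show ∑ k, ν₀ k * (b i k - driftVec q ν₀ i) = 0
    simp only [mul_sub]
    rw [Finset.sum_sub_distrib, ← Finset.sum_mul, hν₀sum, one_mul, ← hbdrift i, sub_self]
  choose hvec hhvec using fun i => hsurj (fun k => b i k - driftVec q ν₀ i) (hw0 i)
  -- the test vector family
  set vv : (Fin d → ℝ) → Fin N → ℝ := fun u k => 1 + ∑ i, hvec i k * u i with hvvdef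
  have hvv0 : ∀ k, vv 0 k = 1 := by
    intro k; rw [hvvdef]; simp
  set g : Fin N → (Fin d → ℝ) → ℝ :=
    fun k u => ((FmatR q u).mulVec (vv u)) k / vv u k with hgdef
  -- derivative of each g k
  have hgderiv : ∀ k, HasFDerivAt (g k) (dotCLM (driftVec q ν₀)) 0 := by
    intro k
    have hdz : ∀ (z : Fin d → ℤ), HasFDerivAt (fun u : Fin d → ℝ => dotZ u z)
        (dotCLM (fun i => (z i : ℝ))) 0 := by
      intro z
      have h1 := dotCLM_hasFDerivAt (fun i => (z i : ℝ)) 0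
      have heq : (fun u : Fin d → ℝ => ∑ i, (z i : ℝ) * u i)
          = fun u : Fin d → ℝ => dotZ u z := by
        funext u
        exact Finset.sum_congr rfl fun i _ => mul_comm _ _
      rw [heq] at h1
      exact h1
    have hvj : ∀ (j : Fin N), HasFDerivAt (fun u => vv u j)
        (dotCLM (fun i => hvec i j)) 0 := by
      intro j
      have h1 := (dotCLM_hasFDerivAt (fun i => hvec i j) (0 : Fin d → ℝ)).const_add 1
      exact h1
    have hterm : ∀ (j : Fin N) (z : Fin d → ℤ), HasFDerivAt
        (fun u => r z k j * (Real.exp (dotZ u z) * vv u j))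
        (r z k j • (Real.exp (dotZ (0 : Fin d → ℝ) z) • dotCLM (fun i => hvec i j)
          + vv 0 j • (Real.exp (dotZ (0 : Fin d → ℝ) z) • dotCLM (fun i => (z i : ℝ))))) 0 :=
      fun j z => (((hdz z).exp).mul (hvj j)).const_mul _
    set LN : (Fin d → ℝ) →L[ℝ] ℝ := ∑ j, ∑ z ∈ Z,
        r z k j • (Real.exp (dotZ (0 : Fin d → ℝ) z) • dotCLM (fun i => hvec i j)
          + vv 0 j • (Real.exp (dotZ (0 : Fin d → ℝ) z) • dotCLM (fun i => (z i : ℝ))))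
      with hLNdef
    have hNumDeriv : HasFDerivAt
        (fun u => ∑ j, ∑ z ∈ Z, r z k j * (Real.exp (dotZ u z) * vv u j)) LN 0 :=
      HasFDerivAt.fun_sum fun j _ => HasFDerivAt.fun_sum fun z _ => hterm j z
    have hvvk1 : vv 0 k ≠ 0 := by rw [hvv0]; norm_num
    have hinv : HasFDerivAt (fun u => (vv u k)⁻¹)
        ((-(vv 0 k ^ 2)⁻¹) • dotCLM (fun i => hvec i k)) 0 :=
      (hasDerivAt_inv hvvk1).comp_hasFDerivAt 0 (hvj k)
    have hNum0 : ∑ j, ∑ z ∈ Z, r z k j * (Real.exp (dotZ (0 : Fin d → ℝ) z) * vv 0 j)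
        = 1 := by
      calc ∑ j, ∑ z ∈ Z, r z k j * (Real.exp (dotZ (0 : Fin d → ℝ) z) * vv 0 j)
          = ∑ j, ∑ z ∈ Z, r z k j := by
            refine Finset.sum_congr rfl fun j _ => Finset.sum_congr rfl fun z _ => ?_
            rw [dotZ_zero, Real.exp_zero, hvv0, one_mul, mul_one]
        _ = 1 := hrow1 k
    have hmul2 := hNumDeriv.mul hinv
    have hfun : g k = fun u =>
        (∑ j, ∑ z ∈ Z, r z k j * (Real.exp (dotZ u z) * vv u j)) * (vv u k)⁻¹ := by
      funext u
      rw [hgdef]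
      show ((FmatR q u).mulVec (vv u)) k / vv u k = _
      rw [div_eq_mul_inv]
      congr 1
      show ∑ j, FmatR q u k j * vv u j = _
      refine Finset.sum_congr rfl fun j _ => ?_
      rw [hFapp, Finset.sum_mul]
      exact Finset.sum_congr rfl fun z _ => by ring
    rw [hfun]
    have hDeq : (∑ j, ∑ z ∈ Z, r z k j * (Real.exp (dotZ (0 : Fin d → ℝ) z) * vv 0 j)) •
          ((-(vv 0 k ^ 2)⁻¹) • dotCLM (fun i => hvec i k)) + (vv 0 k)⁻¹ • LN
        = dotCLM (driftVec q ν₀) := by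
      have e1 : ∀ i, ((FmatR q 0).mulVec (hvec i)) k = ∑ j, ∑ z ∈ Z, r z k j * hvec i j := by
        intro i
        show ∑ j, FmatR q 0 k j * hvec i j = _
        refine Finset.sum_congr rfl fun j _ => ?_
        rw [hS0, Finset.sum_mul]
      have hkeyi : ∀ i, ((FmatR q 0).mulVec (hvec i)) k + b i k - hvec i k
          = driftVec q ν₀ i := by
        intro i
        have h1 := congrFun (hhvec i) k
        have h2 : (hvec i - (FmatR q 0).mulVec (hvec i)) k
            = hvec i k - ((FmatR q 0).mulVec (hvec i)) k := rfl
        rw [h2] at h1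
        linarith [h1]
      apply ContinuousLinearMap.ext
      intro w
      have hT1 : ∑ j, ∑ z ∈ Z, r z k j * (∑ i, hvec i j * w i)
          = ∑ i, ((FmatR q 0).mulVec (hvec i)) k * w i := by
        calc ∑ j, ∑ z ∈ Z, r z k j * (∑ i, hvec i j * w i)
            = ∑ j, ∑ z ∈ Z, ∑ i, r z k j * (hvec i j * w i) := by
              simp only [Finset.mul_sum]
          _ = ∑ j, ∑ i, ∑ z ∈ Z, r z k j * (hvec i j * w i) :=
              Finset.sum_congr rfl fun j _ => Finset.sum_comm
          _ = ∑ i, ∑ j, ∑ z ∈ Z, r z k j * (hvec i j * w i) := Finset.sum_comm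
          _ = ∑ i, ((FmatR q 0).mulVec (hvec i)) k * w i := by
              refine Finset.sum_congr rfl fun i _ => ?_
              rw [e1 i, Finset.sum_mul]
              refine Finset.sum_congr rfl fun j _ => ?_
              rw [Finset.sum_mul]
              exact Finset.sum_congr rfl fun z _ => by ring
      have hT2 : ∑ j, ∑ z ∈ Z, r z k j * (∑ i, (z i : ℝ) * w i)
          = ∑ i, b i k * w i := by
        calc ∑ j, ∑ z ∈ Z, r z k j * (∑ i, (z i : ℝ) * w i)
            = ∑ j, ∑ z ∈ Z, ∑ i, r z k j * ((z i : ℝ) * w i) := by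
              simp only [Finset.mul_sum]
          _ = ∑ j, ∑ i, ∑ z ∈ Z, r z k j * ((z i : ℝ) * w i) :=
              Finset.sum_congr rfl fun j _ => Finset.sum_comm
          _ = ∑ i, ∑ j, ∑ z ∈ Z, r z k j * ((z i : ℝ) * w i) := Finset.sum_comm
          _ = ∑ i, b i k * w i := by
              refine Finset.sum_congr rfl fun i _ => ?_
              show _ = (∑ z ∈ Z, ∑ j, (z i : ℝ) * r z k j) * w i
              rw [Finset.sum_mul, Finset.sum_comm]
              refine Finset.sum_congr rfl fun j _ => ?_
              rw [Finset.sum_mul]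
              exact Finset.sum_congr rfl fun z _ => by ring
      rw [hNum0]
      simp only [ContinuousLinearMap.add_apply, ContinuousLinearMap.smul_apply, hvv0,
        one_pow, inv_one, one_smul, smul_eq_mul, hLNdef, ContinuousLinearMap.sum_apply,
        dotZ_zero, Real.exp_zero, dotCLM_apply, one_mul, mul_one]
      have hfinal : ∑ j, ∑ z ∈ Z, r z k j * ((∑ i, hvec i j * w i) + ∑ i, (z i : ℝ) * w i)
          = ∑ i, (((FmatR q 0).mulVec (hvec i)) k + b i k) * w i := by
        calc ∑ j, ∑ z ∈ Z, r z k j * ((∑ i, hvec i j * w i) + ∑ i, (z i : ℝ) * w i)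
            = ∑ j, ∑ z ∈ Z, (r z k j * (∑ i, hvec i j * w i)
                + r z k j * (∑ i, (z i : ℝ) * w i)) := by
              exact Finset.sum_congr rfl fun j _ => Finset.sum_congr rfl fun z _ => by ring
          _ = (∑ j, ∑ z ∈ Z, r z k j * (∑ i, hvec i j * w i))
              + ∑ j, ∑ z ∈ Z, r z k j * (∑ i, (z i : ℝ) * w i) := by
              rw [← Finset.sum_add_distrib]
              refine Finset.sum_congr rfl fun j _ => ?_
              rw [← Finset.sum_add_distrib]
          _ = (∑ i, ((FmatR q 0).mulVec (hvec i)) k * w i) + ∑ i, b i k * w i := by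
              rw [hT1, hT2]
          _ = ∑ i, (((FmatR q 0).mulVec (hvec i)) k + b i k) * w i := by
              rw [← Finset.sum_add_distrib]
              exact Finset.sum_congr rfl fun i _ => by ring
      calc -1 * ∑ i, hvec i k * w i
            + ∑ j, ∑ z ∈ Z, r z k j * ((∑ i, hvec i j * w i) + ∑ i, (z i : ℝ) * w i)
          = (∑ i, (((FmatR q 0).mulVec (hvec i)) k + b i k) * w i)
            - ∑ i, hvec i k * w i := by rw [hfinal]; ring
        _ = ∑ i, ((((FmatR q 0).mulVec (hvec i)) k + b i k) * w i - hvec i k * w i) := by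
            rw [Finset.sum_sub_distrib]
        _ = ∑ i, driftVec q ν₀ i * w i := by
            refine Finset.sum_congr rfl fun i _ => ?_
            rw [← hkeyi i]
            ring
    rw [← hDeq]
    exact hmul2
  -- eventual positivity of vv and the eigenvalue upper bound
  have hvvcont : ∀ k, Continuous (fun u : Fin d → ℝ => vv u k) := by
    intro k
    simp only [hvvdef]
    exact continuous_const.add
      (continuous_finset_sum _ fun i _ => continuous_const.mul (continuous_apply i))
  have hvvpos : ∀ᶠ u in 𝓝 (0 : Fin d → ℝ), ∀ k, 0 < vv u k := by
    rw [Filter.eventually_all]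
    intro k
    have h1 : Filter.Tendsto (fun u : Fin d → ℝ => vv u k) (𝓝 0) (𝓝 (vv 0 k)) :=
      (hvvcont k).tendsto 0
    rw [hvv0] at h1
    exact h1.eventually (eventually_gt_nhds one_pos)
  have hevent : ∀ᶠ u in 𝓝 (0 : Fin d → ℝ), ∃ kk, lam u ≤ g kk u := by
    filter_upwards [hvvpos] with u hu
    obtain ⟨C, hCpos, hCeig⟩ := hPerron u
    obtain ⟨kk, hkk⟩ := perron_upper hN (FmatR q u) (hFnn u) C (vv u) hCpos hu (lam u) hCeig
    exact ⟨kk, hkk⟩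
  -- the derivative of lam
  have hg0 : ∀ k, g k 0 = 1 := by
    intro k
    have hnum : ((FmatR q 0).mulVec (vv 0)) k = 1 := by
      show ∑ j, FmatR q 0 k j * vv 0 j = 1
      calc ∑ j, FmatR q 0 k j * vv 0 j = ∑ j, FmatR q 0 k j :=
            Finset.sum_congr rfl fun j _ => by rw [hvv0, mul_one]
        _ = 1 := hSrow k
    show ((FmatR q 0).mulVec (vv 0)) k / vv 0 k = 1
    rw [hnum, hvv0]
    norm_num
  have hφ : ∀ k, (fun u => g k u - 1 - dotCLM (driftVec q ν₀) u)
      =o[𝓝 (0 : Fin d → ℝ)] (fun u => u) := by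
    intro k
    have h2 := (hgderiv k).isLittleO
    simpa [hg0 k, sub_zero] using h2
  have hsumo : (fun u : Fin d → ℝ => ∑ k, ‖g k u - 1 - dotCLM (driftVec q ν₀) u‖)
      =o[𝓝 (0 : Fin d → ℝ)] (fun u => u) :=
    Asymptotics.IsLittleO.fun_sum fun k _ => (hφ k).norm_left
  have hψO : (fun u => lam u - 1 - dotCLM (driftVec q ν₀) u)
      =O[𝓝 (0 : Fin d → ℝ)]
        (fun u => ∑ k, ‖g k u - 1 - dotCLM (driftVec q ν₀) u‖) := by
    rw [Asymptotics.isBigO_iff]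
    refine ⟨1, ?_⟩
    filter_upwards [hevent] with u hu
    obtain ⟨kk, hkk⟩ := hu
    have hlb : 1 + dotCLM (driftVec q ν₀) u ≤ lam u := by
      have h1 := hlower u
      have h2 := Real.add_one_le_exp (∑ i, driftVec q ν₀ i * u i)
      rw [dotCLM_apply]
      linarith
    have hub : lam u - 1 - dotCLM (driftVec q ν₀) u
        ≤ ‖g kk u - 1 - dotCLM (driftVec q ν₀) u‖ := by
      have h3 : lam u - 1 - dotCLM (driftVec q ν₀) u
          ≤ g kk u - 1 - dotCLM (driftVec q ν₀) u := by linarith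
      refine h3.trans ?_
      rw [Real.norm_eq_abs]
      exact le_abs_self _
    have hsum_ge : ‖g kk u - 1 - dotCLM (driftVec q ν₀) u‖
        ≤ ∑ k, ‖g k u - 1 - dotCLM (driftVec q ν₀) u‖ :=
      Finset.single_le_sum (f := fun k => ‖g k u - 1 - dotCLM (driftVec q ν₀) u‖)
        (fun k _ => norm_nonneg _) (Finset.mem_univ kk)
    rw [one_mul, Real.norm_eq_abs, Real.norm_eq_abs,
      abs_of_nonneg (by linarith : (0:ℝ) ≤ lam u - 1 - dotCLM (driftVec q ν₀) u),
      abs_of_nonneg (Finset.sum_nonneg fun k _ => norm_nonneg _)]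
    linarith
  have hψ : (fun u => lam u - 1 - dotCLM (driftVec q ν₀) u)
      =o[𝓝 (0 : Fin d → ℝ)] (fun u : Fin d → ℝ => u) :=
    hψO.trans_isLittleO hsumo
  have hderiv : HasFDerivAt lam (dotCLM (driftVec q ν₀)) 0 := by
    rw [hasFDerivAt_iff_isLittleO_nhds_zero]
    have hcong : (fun h : Fin d → ℝ => lam (0 + h) - lam 0 - dotCLM (driftVec q ν₀) h)
        = fun h : Fin d → ℝ => lam h - 1 - dotCLM (driftVec q ν₀) h := by
      funext h
      rw [zero_add, hlam0]
    rw [hcong]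
    exact hψ
  refine ⟨hlam0, hderiv, ?_, ?_⟩
  · intro hmin
    have hloc : IsLocalMin lam 0 :=
      Filter.Eventually.of_forall fun u => by rw [hlam0]; exact hmin u
    have hz := hloc.hasFDerivAt_eq_zero hderiv
    funext i
    have h1 : dotCLM (driftVec q ν₀) (Pi.single i 1 : Fin d → ℝ) = 0 := by rw [hz]; rfl
    rw [dotCLM_apply] at h1
    have h2 : ∑ i', driftVec q ν₀ i' * (Pi.single i 1 : Fin d → ℝ) i' = driftVec q ν₀ i := by
      rw [Finset.sum_eq_single i]
      · simp
      · intro i' _ hne; simp [Pi.single_apply, hne]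
      · intro h; exact absurd (Finset.mem_univ i) h
    rw [h2] at h1
    simpa using h1
  · intro hp0 u
    have h1 := hlower u
    rw [hp0] at h1
    simpa using h1
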